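/- Suppose Q is in rational normal form with parameters z and k_1,…,k_d, and γ is generic. Let α be a normalized 2-cocycle on g(γ,Q) and write α(m)=α(L_m,L_{−m}). If m∈ℤ^d∖R and m_i≠0 for some odd index i with 1≤i≤2z, then α(m)=((γ|m)/(γ|e_1))·σ(m,−m)·α(e_1). -/

import Mathlib

open scoped BigOperators

namespace QTorus

/-- σ(m,n) = ∏_{i<j} q_{ji}^{m_j n_i}. -/
noncomputable def qsigma (d : ℕ) (Q : Matrix (Fin d) (Fin d) ℂ) (m n : Fin d → ℤ) : ℂ :=
  ∏ i : Fin d, ∏ j : Fin d, if i < j then Q j i ^ (m j * n i) else 1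

/-- The radical subgroup R = {m | σ(m,n)=σ(n,m) for all n}. -/
def Rset (d : ℕ) (Q : Matrix (Fin d) (Fin d) ℂ) : Set (Fin d → ℤ) :=
  {m | ∀ n : Fin d → ℤ, qsigma d Q m n = qsigma d Q n m}

/-- (γ|m) = ∑ γ_i m_i. -/
noncomputable def ip (d : ℕ) (γ : Fin d → ℂ) (m : Fin d → ℤ) : ℂ :=
  ∑ i : Fin d, γ i * (m i : ℂ)

/-- The underlying vector space of g(γ,Q): formal ℂ-linear combinations of basis
vectors indexed by ℤ^d. -/
abbrev g (d : ℕ) := (Fin d → ℤ) →₀ ℂ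

/-- The basis vector L_m. -/
noncomputable def L (d : ℕ) (m : Fin d → ℤ) : g d := Finsupp.single m 1

/-- Hypotheses on the matrix Q: nonzero entries, q_{ii}=1, q_{ij}q_{ji}=1. -/
def QOk (d : ℕ) (Q : Matrix (Fin d) (Fin d) ℂ) : Prop :=
  (∀ i, Q i i = 1) ∧ (∀ i j, Q i j * Q j i = 1) ∧ (∀ i j, Q i j ≠ 0)

/-- γ is generic: γ_1,…,γ_d are linearly independent over ℚ. -/
def Generic (d : ℕ) (γ : Fin d → ℂ) : Prop := LinearIndependent ℚ γ

open Classical in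
/-- Structure constants of g(γ,Q): [L_m, L_n] = sc(m,n) • L_{m+n}. -/
noncomputable def sc (d : ℕ) (Q : Matrix (Fin d) (Fin d) ℂ) (γ : Fin d → ℂ)
    (m n : Fin d → ℤ) : ℂ :=
  if m ∈ Rset d Q then
    (if n ∈ Rset d Q then qsigma d Q m n * ip d γ (n - m)
     else qsigma d Q m n * ip d γ n)
  else
    (if n ∈ Rset d Q then -(qsigma d Q n m * ip d γ m)
     else qsigma d Q m n - qsigma d Q n m)

/-- The bracket of g(γ,Q), as the bilinear extension of
[L_m, L_n] = sc(m,n) • L_{m+n}. -/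
noncomputable def br (d : ℕ) (Q : Matrix (Fin d) (Fin d) ℂ) (γ : Fin d → ℂ)
    (x y : g d) : g d :=
  x.sum fun m a => y.sum fun n b => Finsupp.single (m + n) (a * b * sc d Q γ m n)

/-- A Lie algebra automorphism of g(γ,Q): a linear equivalence preserving the bracket. -/
def IsAut (d : ℕ) (Q : Matrix (Fin d) (Fin d) ℂ) (γ : Fin d → ℂ)
    (θ : g d ≃ₗ[ℂ] g d) : Prop :=
  ∀ x y : g d, θ (br d Q γ x y) = br d Q γ (θ x) (θ y)

/-- A derivation of g(γ,Q). -/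
def IsDer (d : ℕ) (Q : Matrix (Fin d) (Fin d) ℂ) (γ : Fin d → ℂ)
    (D : g d →ₗ[ℂ] g d) : Prop :=
  ∀ x y : g d, D (br d Q γ x y) = br d Q γ (D x) y + br d Q γ x (D y)

open Classical in
/-- δ(n,R) = 1 if n ∈ R, 0 otherwise. -/
noncomputable def deltaR (d : ℕ) (Q : Matrix (Fin d) (Fin d) ℂ) (n : Fin d → ℤ) : ℕ :=
  if n ∈ Rset d Q then 1 else 0

/-- A 2-cocycle on g(γ,Q). -/
def IsCocycle (d : ℕ) (Q : Matrix (Fin d) (Fin d) ℂ) (γ : Fin d → ℂ)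
    (α : g d →ₗ[ℂ] g d →ₗ[ℂ] ℂ) : Prop :=
  (∀ x y : g d, α x y = - α y x) ∧
  (∀ x y z : g d,
    α (br d Q γ x y) z + α (br d Q γ z x) y + α (br d Q γ y z) x = 0)

/-- i ↔ j is one of the exceptional index pairs (2l-1,2l) (1-based) of the rational
normal form. Here indices are 0-based. -/
def OffDiagPair (z : ℕ) (i j : ℕ) : Prop :=
  ∃ l : ℕ, l < z ∧ ((i = 2 * l ∧ j = 2 * l + 1) ∨ (i = 2 * l + 1 ∧ j = 2 * l))

/-- Q is in rational normal form with parameters z and k_1,…,k_d (0-based indexing: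
the paper's pair (2i-1,2i) is the Lean pair (2l, 2l+1) with l = i-1). -/
def IsRNF (d : ℕ) (Q : Matrix (Fin d) (Fin d) ℂ) (z : ℕ) (k : Fin d → ℕ) : Prop :=
  0 < z ∧ 2 * z ≤ d ∧
  (∀ i j : Fin d, ¬ OffDiagPair z i.val j.val → Q i j = 1) ∧
  (∀ (l : ℕ) (_ : l < z) (hi : 2 * l < d) (hj : 2 * l + 1 < d),
      IsPrimitiveRoot (Q ⟨2 * l, hi⟩ ⟨2 * l + 1, hj⟩) (k ⟨2 * l, hi⟩) ∧
      Q ⟨2 * l + 1, hj⟩ ⟨2 * l, hi⟩ = (Q ⟨2 * l, hi⟩ ⟨2 * l + 1, hj⟩)⁻¹ ∧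
      k ⟨2 * l + 1, hj⟩ = k ⟨2 * l, hi⟩ ∧
      1 < k ⟨2 * l, hi⟩) ∧
  (∀ (i : ℕ) (_ : i + 1 < 2 * z) (h1 : i < d) (h2 : i + 1 < d),
      k ⟨i + 1, h2⟩ ∣ k ⟨i, h1⟩) ∧
  (∀ i : Fin d, 2 * z ≤ i.val → k i = 1)

/-- The vector k_1 e_1 ∈ ℤ^d. -/
noncomputable def k1e1 (d : ℕ) (k : Fin d → ℕ) (hd : 0 < d) : Fin d → ℤ :=
  Pi.single ⟨0, hd⟩ (k ⟨0, hd⟩ : ℤ)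

/-- A 2-cocycle is normalized if α(L_{m-k₁e₁}, L_{k₁e₁})=0 for m ∈ R, m ≠ 2k₁e₁,
α(L_0, L_{2k₁e₁})=0, α(L_0, L_s)=0 for s ∉ R, and α(L_m,L_n)=0 whenever m+n ≠ 0. -/
def IsNormalized (d : ℕ) (Q : Matrix (Fin d) (Fin d) ℂ) (k : Fin d → ℕ) (hd : 0 < d)
    (α : g d →ₗ[ℂ] g d →ₗ[ℂ] ℂ) : Prop :=
  (∀ m ∈ Rset d Q, m ≠ 2 • k1e1 d k hd →
      α (L d (m - k1e1 d k hd)) (L d (k1e1 d k hd)) = 0) ∧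
  α (L d 0) (L d (2 • k1e1 d k hd)) = 0 ∧
  (∀ s, s ∉ Rset d Q → α (L d 0) (L d s) = 0) ∧
  (∀ m n : Fin d → ℤ, m + n ≠ 0 → α (L d m) (L d n) = 0)

/-- The degree derivation ∂_i, acting by ∂_i(L_m) = m_i L_m. -/
noncomputable def deg (d : ℕ) (i : Fin d) (y : g d) : g d :=
  y.sum fun m a => Finsupp.single m ((m i : ℂ) * a)

open Classical in
/-- The 2-cocycle α₁: α₁(L_m,L_n) = δ_{m+n,0}((m_γ)³-m_γ)/12 for m ∈ R, 0 otherwise,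
where m_γ = (γ|m)/(γ|k₁e₁). -/
noncomputable def alpha1 (d : ℕ) (Q : Matrix (Fin d) (Fin d) ℂ) (γ : Fin d → ℂ)
    (k : Fin d → ℕ) (hd : 0 < d) (x y : g d) : ℂ :=
  x.sum fun m a => y.sum fun n b => a * b *
    (if m ∈ Rset d Q ∧ m + n = 0 then
       ((ip d γ m / ip d γ (k1e1 d k hd)) ^ 3 - ip d γ m / ip d γ (k1e1 d k hd)) / 12
     else 0)

open Classical in
/-- The 2-cocycle α₂: α₂(L_r,L_s) = δ_{r+s,0} σ(r,-r)(γ|r)/(γ|k₁e₁) for r ∉ R,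
0 otherwise. -/
noncomputable def alpha2 (d : ℕ) (Q : Matrix (Fin d) (Fin d) ℂ) (γ : Fin d → ℂ)
    (k : Fin d → ℕ) (hd : 0 < d) (x y : g d) : ℂ :=
  x.sum fun m a => y.sum fun n b => a * b *
    (if m ∉ Rset d Q ∧ m + n = 0 then
       qsigma d Q m (-m) * (ip d γ m / ip d γ (k1e1 d k hd))
     else 0)

end QTorus

open QTorus

/-!
For `m ∉ R` put `f(m) = α(m) / (σ(m,-m) (γ|m))`. The cocycle identity on `L_r, L_s, L_{-(r+s)}`
gives `f(r + s) = f(r)` when `s ∈ R`, and `(γ|r+s) f(r+s) = (γ|r) f(r) + (γ|s) f(s)` when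
`σ(r,s) ≠ σ(s,r)`. Applying the second relation also to `r, s + t` for a nonzero `t ∈ R` (such as
`k₁e₁`) and using that `(γ|t) ≠ 0` by genericity yields `f(r) = f(s)` for every non-commuting pair.
In rational normal form each `m ∉ R` fails to commute with one of the unit vectors of some
exceptional pair, and all these unit vectors are joined to `e₁` by chains of non-commuting pairs,
so `f` is constant off `R`.
-/

namespace QTorus

section Bicharacter

variable {d : ℕ} {Q : Matrix (Fin d) (Fin d) ℂ}

lemma qsigma_ne_zero (hQ : ∀ i j, Q i j ≠ 0) (m n : Fin d → ℤ) : qsigma d Q m n ≠ 0 :=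
  Finset.prod_ne_zero_iff.mpr fun i _ => Finset.prod_ne_zero_iff.mpr fun j _ => by
    split_ifs
    exacts [zpow_ne_zero _ (hQ j i), one_ne_zero]

lemma qsigma_add_left (hQ : ∀ i j, Q i j ≠ 0) (m m' n : Fin d → ℤ) :
    qsigma d Q (m + m') n = qsigma d Q m n * qsigma d Q m' n := by
  simp only [qsigma, ← Finset.prod_mul_distrib]
  refine Finset.prod_congr rfl fun i _ => Finset.prod_congr rfl fun j _ => ?_
  split_ifs <;> simp [add_mul, zpow_add₀ (hQ j i)]

lemma qsigma_add_right (hQ : ∀ i j, Q i j ≠ 0) (m n n' : Fin d → ℤ) :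
    qsigma d Q m (n + n') = qsigma d Q m n * qsigma d Q m n' := by
  simp only [qsigma, ← Finset.prod_mul_distrib]
  refine Finset.prod_congr rfl fun i _ => Finset.prod_congr rfl fun j _ => ?_
  split_ifs <;> simp [mul_add, zpow_add₀ (hQ j i)]

lemma qsigma_neg_left (m n : Fin d → ℤ) : qsigma d Q (-m) n = (qsigma d Q m n)⁻¹ := by
  simp only [qsigma, ← Finset.prod_inv_distrib]
  refine Finset.prod_congr rfl fun i _ => Finset.prod_congr rfl fun j _ => ?_
  split_ifs <;> simp [neg_mul, zpow_neg]

lemma qsigma_neg_right (m n : Fin d → ℤ) : qsigma d Q m (-n) = (qsigma d Q m n)⁻¹ := by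
  simp only [qsigma, ← Finset.prod_inv_distrib]
  refine Finset.prod_congr rfl fun i _ => Finset.prod_congr rfl fun j _ => ?_
  split_ifs <;> simp [mul_neg, zpow_neg]

lemma qsigma_single_left (a : Fin d) (c : ℤ) (m : Fin d → ℤ) :
    qsigma d Q (Pi.single a c) m = ∏ i : Fin d, if i < a then Q a i ^ (c * m i) else 1 := by
  refine Finset.prod_congr rfl fun i _ => ?_
  rw [Finset.prod_eq_single a (fun j _ hj => by simp [Pi.single_eq_of_ne hj]) (by simp)]
  simp

lemma qsigma_single_right (a : Fin d) (c : ℤ) (m : Fin d → ℤ) :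
    qsigma d Q m (Pi.single a c) = ∏ j : Fin d, if a < j then Q j a ^ (m j * c) else 1 := by
  rw [qsigma, Finset.prod_comm]
  refine Finset.prod_congr rfl fun j _ => ?_
  rw [Finset.prod_eq_single a (fun i _ hi => by simp [Pi.single_eq_of_ne hi]) (by simp)]
  simp

end Bicharacter

section Radical

variable {d : ℕ} {Q : Matrix (Fin d) (Fin d) ℂ}

lemma zero_mem_Rset : (0 : Fin d → ℤ) ∈ Rset d Q := fun n => by simp [qsigma]

lemma ne_zero_of_notMem_Rset {r : Fin d → ℤ} (hr : r ∉ Rset d Q) : r ≠ 0 :=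
  fun h => hr (h ▸ zero_mem_Rset)

lemma neg_mem_Rset_iff {m : Fin d → ℤ} : -m ∈ Rset d Q ↔ m ∈ Rset d Q := by
  suffices ∀ m : Fin d → ℤ, m ∈ Rset d Q → -m ∈ Rset d Q from
    ⟨fun h => neg_neg m ▸ this _ h, this m⟩
  intro m hm n
  rw [qsigma_neg_left, qsigma_neg_right, hm n]

lemma add_notMem_Rset (hQ : ∀ i j, Q i j ≠ 0) {r s : Fin d → ℤ}
    (hr : r ∉ Rset d Q) (hs : s ∈ Rset d Q) : r + s ∉ Rset d Q := by
  intro hrs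
  refine hr fun n => ?_
  have := hrs n
  rw [qsigma_add_left hQ, qsigma_add_right hQ, hs n] at this
  exact mul_right_cancel₀ (qsigma_ne_zero hQ n s) this

lemma notMem_Rset_of_qsigma_ne {r s : Fin d → ℤ} (h : qsigma d Q r s ≠ qsigma d Q s r) :
    r ∉ Rset d Q := fun hr => h (hr s)

lemma add_notMem_Rset_of_qsigma_ne (hQ : ∀ i j, Q i j ≠ 0) {r s : Fin d → ℤ}
    (h : qsigma d Q r s ≠ qsigma d Q s r) : r + s ∉ Rset d Q := by
  intro hrs
  have := hrs r
  rw [qsigma_add_left hQ, qsigma_add_right hQ] at this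
  exact h (mul_left_cancel₀ (qsigma_ne_zero hQ r r) this).symm

end Radical

section InnerProduct

variable {d : ℕ} {γ : Fin d → ℂ}

lemma ip_add (m n : Fin d → ℤ) : ip d γ (m + n) = ip d γ m + ip d γ n := by
  simp only [ip, ← Finset.sum_add_distrib, Pi.add_apply, Int.cast_add, mul_add]

lemma ip_neg (m : Fin d → ℤ) : ip d γ (-m) = -ip d γ m := by
  simp only [ip, ← Finset.sum_neg_distrib, Pi.neg_apply, Int.cast_neg, mul_neg]

lemma ip_ne_zero (hγ : Generic d γ) {m : Fin d → ℤ} (hm : m ≠ 0) : ip d γ m ≠ 0 := by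
  intro h
  have hcoef := Fintype.linearIndependent_iff.mp hγ (fun i => (m i : ℚ)) <| by
    rw [← h, ip]
    refine Finset.sum_congr rfl fun i _ => ?_
    rw [Rat.smul_def, Rat.cast_intCast, mul_comm]
  exact hm <| funext fun i => by exact_mod_cast hcoef i

end InnerProduct

section Cocycle

variable {d : ℕ} {Q : Matrix (Fin d) (Fin d) ℂ} {γ : Fin d → ℂ} {α : g d →ₗ[ℂ] g d →ₗ[ℂ] ℂ}

lemma br_L (m n : Fin d → ℤ) :
    br d Q γ (L d m) (L d n) = Finsupp.single (m + n) (sc d Q γ m n) := by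
  simp only [br, L]
  rw [Finsupp.sum_single_index (by simp), Finsupp.sum_single_index (by simp), one_mul, one_mul]

lemma apply_single_left (a : Fin d → ℤ) (c : ℂ) (y : g d) :
    α (Finsupp.single a c) y = c * α (L d a) y := by
  rw [L, ← smul_eq_mul, ← LinearMap.smul_apply, ← map_smul, Finsupp.smul_single, smul_eq_mul,
    mul_one]

lemma IsCocycle.apply_L_neg_swap (hα : IsCocycle d Q γ α) (m : Fin d → ℤ) :
    α (L d (-m)) (L d m) = -α (L d m) (L d (-m)) := by
  simpa using hα.1 (L d (-m)) (L d m)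

lemma IsCocycle.sc_mul_apply_add (hα : IsCocycle d Q γ α) (r s : Fin d → ℤ) :
    sc d Q γ r s * α (L d (r + s)) (L d (-(r + s))) =
      sc d Q γ (-(r + s)) r * α (L d s) (L d (-s)) +
        sc d Q γ s (-(r + s)) * α (L d r) (L d (-r)) := by
  have h := hα.2 (L d r) (L d s) (L d (-(r + s)))
  rw [br_L, br_L, br_L, apply_single_left, apply_single_left, apply_single_left,
    show -(r + s) + r = -s by abel, show s + -(r + s) = -r by abel,
    hα.apply_L_neg_swap, hα.apply_L_neg_swap] at h
  linear_combination h

noncomputable def cocycleRatio (Q : Matrix (Fin d) (Fin d) ℂ) (γ : Fin d → ℂ)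
    (α : g d →ₗ[ℂ] g d →ₗ[ℂ] ℂ) (m : Fin d → ℤ) : ℂ :=
  α (L d m) (L d (-m)) / (qsigma d Q m (-m) * ip d γ m)

lemma cocycleRatio_add_of_mem_Rset (hQ : ∀ i j, Q i j ≠ 0) (hγ : Generic d γ)
    (hα : IsCocycle d Q γ α) {r s : Fin d → ℤ} (hr : r ∉ Rset d Q) (hs : s ∈ Rset d Q) :
    cocycleRatio Q γ α (r + s) = cocycleRatio Q γ α r := by
  have hrs := add_notMem_Rset hQ hr hs
  have h := hα.sc_mul_apply_add r s
  simp only [sc, if_neg hr, if_pos hs, if_neg (neg_mem_Rset_iff.not.mpr hrs), hs r,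
    qsigma_neg_left, qsigma_neg_right, qsigma_add_left hQ, qsigma_add_right hQ, ip_neg,
    ip_add, sub_self, zero_mul, zero_add] at h
  have hIr := ip_ne_zero hγ (ne_zero_of_notMem_Rset hr)
  have hIrs := ip_add (γ := γ) r s ▸ ip_ne_zero hγ (ne_zero_of_notMem_Rset hrs)
  have := qsigma_ne_zero hQ r r
  have := qsigma_ne_zero hQ r s
  have := qsigma_ne_zero hQ s s
  simp only [cocycleRatio, qsigma_neg_right, qsigma_add_left hQ, qsigma_add_right hQ, hs r, ip_add]
  field_simp at h ⊢
  linear_combination -h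

lemma ip_mul_cocycleRatio_add (hQ : ∀ i j, Q i j ≠ 0) (hγ : Generic d γ)
    (hα : IsCocycle d Q γ α) {r s : Fin d → ℤ} (hne : qsigma d Q r s ≠ qsigma d Q s r) :
    ip d γ (r + s) * cocycleRatio Q γ α (r + s) =
      ip d γ r * cocycleRatio Q γ α r + ip d γ s * cocycleRatio Q γ α s := by
  have hr := notMem_Rset_of_qsigma_ne hne
  have hs := notMem_Rset_of_qsigma_ne hne.symm
  have hrs := add_notMem_Rset_of_qsigma_ne hQ hne
  have h := hα.sc_mul_apply_add r s
  simp only [sc, if_neg hr, if_neg hs, if_neg (neg_mem_Rset_iff.not.mpr hrs),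
    qsigma_neg_left, qsigma_neg_right, qsigma_add_left hQ, qsigma_add_right hQ] at h
  have hIr := ip_ne_zero hγ (ne_zero_of_notMem_Rset hr)
  have hIs := ip_ne_zero hγ (ne_zero_of_notMem_Rset hs)
  have hIrs := ip_add (γ := γ) r s ▸ ip_ne_zero hγ (ne_zero_of_notMem_Rset hrs)
  have := qsigma_ne_zero hQ r r
  have := qsigma_ne_zero hQ r s
  have := qsigma_ne_zero hQ s r
  have := qsigma_ne_zero hQ s s
  simp only [cocycleRatio, qsigma_neg_right, qsigma_add_left hQ, qsigma_add_right hQ, ip_add]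
  field_simp at h ⊢
  linear_combination h

lemma cocycleRatio_eq_of_qsigma_ne (hQ : ∀ i j, Q i j ≠ 0) (hγ : Generic d γ)
    (hα : IsCocycle d Q γ α) (hR : ∃ t ∈ Rset d Q, t ≠ 0)
    {r s : Fin d → ℤ} (hne : qsigma d Q r s ≠ qsigma d Q s r) :
    cocycleRatio Q γ α r = cocycleRatio Q γ α s := by
  obtain ⟨t, ht, ht0⟩ := hR
  have hne' : qsigma d Q r (s + t) ≠ qsigma d Q (s + t) r := by
    rwa [qsigma_add_right hQ, qsigma_add_left hQ, ht r,
      Ne, mul_left_inj' (qsigma_ne_zero hQ r t)]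
  have hrel := ip_mul_cocycleRatio_add hQ hγ hα hne
  have hrel' := ip_mul_cocycleRatio_add hQ hγ hα hne'
  rw [← add_assoc, cocycleRatio_add_of_mem_Rset hQ hγ hα (add_notMem_Rset_of_qsigma_ne hQ hne) ht,
    cocycleRatio_add_of_mem_Rset hQ hγ hα (notMem_Rset_of_qsigma_ne hne.symm) ht] at hrel'
  simp only [ip_add] at hrel hrel'
  have hsum : cocycleRatio Q γ α (r + s) = cocycleRatio Q γ α s :=
    mul_left_cancel₀ (ip_ne_zero hγ ht0) (by linear_combination hrel' - hrel)
  rw [hsum] at hrel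
  exact mul_left_cancel₀ (ip_ne_zero hγ (ne_zero_of_notMem_Rset (notMem_Rset_of_qsigma_ne hne)))
    (by linear_combination -hrel)

end Cocycle

section RationalNormalForm

variable {d : ℕ} {Q : Matrix (Fin d) (Fin d) ℂ} {z : ℕ} {k : Fin d → ℕ} {γ : Fin d → ℂ}
  {α : g d →ₗ[ℂ] g d →ₗ[ℂ] ℂ} {l : ℕ} {i j : Fin d}

lemma IsRNF.apply_eq_one_of_lt (hRNF : IsRNF d Q z k) {a b : Fin d} (hba : b < a)
    (h : ∀ l, a.val = 2 * l + 1 → b.val ≠ 2 * l) : Q a b = 1 := by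
  refine hRNF.2.2.1 a b ?_
  rintro ⟨l, -, ⟨ha, hb⟩ | ⟨ha, hb⟩⟩
  · exact absurd (Fin.lt_def.mp hba) (by omega)
  · exact h l ha hb

lemma IsRNF.isPrimitiveRoot (hRNF : IsRNF d Q z k) (hl : l < z) (hi : i.val = 2 * l)
    (hj : j.val = 2 * l + 1) : IsPrimitiveRoot (Q j i) (k i) := by
  obtain ⟨i, hi'⟩ := i
  obtain ⟨j, hj'⟩ := j
  dsimp only at hi hj
  subst hi hj
  obtain ⟨hprim, hinv, -, -⟩ := hRNF.2.2.2.1 l hl hi' hj'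
  exact hinv ▸ hprim.inv

lemma IsRNF.one_lt (hRNF : IsRNF d Q z k) (hl : l < z) (hi : i.val = 2 * l) : 1 < k i := by
  obtain ⟨i, hi'⟩ := i
  dsimp only at hi
  subst hi
  have hj' : 2 * l + 1 < d := by have := hRNF.2.1; omega
  exact (hRNF.2.2.2.1 l hl hi' hj').2.2.2

lemma IsRNF.qsigma_single_odd_left (hRNF : IsRNF d Q z k) (hi : i.val = 2 * l)
    (hj : j.val = 2 * l + 1) (m : Fin d → ℤ) :
    qsigma d Q (Pi.single j 1) m = Q j i ^ m i := by
  rw [qsigma_single_left, Finset.prod_eq_single i, if_pos (by rw [Fin.lt_def]; omega), one_mul]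
  · intro a _ ha
    split_ifs with hlt
    · rw [hRNF.apply_eq_one_of_lt hlt fun l' _ _ => ha (Fin.ext (by omega)), one_zpow]
    · rfl
  · simp

lemma IsRNF.qsigma_single_odd_right (hRNF : IsRNF d Q z k) (hj : j.val = 2 * l + 1)
    (m : Fin d → ℤ) : qsigma d Q m (Pi.single j 1) = 1 := by
  rw [qsigma_single_right]
  refine Finset.prod_eq_one fun a _ => ?_
  split_ifs with hlt
  · rw [hRNF.apply_eq_one_of_lt hlt fun l' _ _ => by omega, one_zpow]
  · rfl

lemma IsRNF.qsigma_single_even_left (hRNF : IsRNF d Q z k) (hi : i.val = 2 * l)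
    (m : Fin d → ℤ) : qsigma d Q (Pi.single i 1) m = 1 := by
  rw [qsigma_single_left]
  refine Finset.prod_eq_one fun a _ => ?_
  split_ifs with hlt
  · rw [hRNF.apply_eq_one_of_lt hlt fun l' _ _ => by omega, one_zpow]
  · rfl

lemma IsRNF.qsigma_single_even_right (hRNF : IsRNF d Q z k) (hi : i.val = 2 * l)
    (hj : j.val = 2 * l + 1) (m : Fin d → ℤ) :
    qsigma d Q m (Pi.single i 1) = Q j i ^ m j := by
  rw [qsigma_single_right, Finset.prod_eq_single j, if_pos (by rw [Fin.lt_def]; omega), mul_one]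
  · intro a _ ha
    split_ifs with hlt
    · rw [hRNF.apply_eq_one_of_lt hlt fun l' _ _ => ha (Fin.ext (by omega)), one_zpow]
    · rfl
  · simp

lemma IsRNF.qsigma_single_odd_ne (hRNF : IsRNF d Q z k) (hl : l < z) (hi : i.val = 2 * l)
    (hj : j.val = 2 * l + 1) {m : Fin d → ℤ} (hm : ¬ (k i : ℤ) ∣ m i) :
    qsigma d Q (Pi.single j 1) m ≠ qsigma d Q m (Pi.single j 1) := by
  rwa [hRNF.qsigma_single_odd_left hi hj, hRNF.qsigma_single_odd_right hj, Ne,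
    (hRNF.isPrimitiveRoot hl hi hj).zpow_eq_one_iff_dvd]

lemma IsRNF.qsigma_single_even_ne (hRNF : IsRNF d Q z k) (hl : l < z) (hi : i.val = 2 * l)
    (hj : j.val = 2 * l + 1) {m : Fin d → ℤ} (hm : ¬ (k i : ℤ) ∣ m j) :
    qsigma d Q m (Pi.single i 1) ≠ qsigma d Q (Pi.single i 1) m := by
  rwa [hRNF.qsigma_single_even_right hi hj, hRNF.qsigma_single_even_left hi, Ne,
    (hRNF.isPrimitiveRoot hl hi hj).zpow_eq_one_iff_dvd]

lemma IsRNF.mem_Rset_of_dvd (hRNF : IsRNF d Q z k) {m : Fin d → ℤ}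
    (hm : ∀ l < z, ∀ i j : Fin d, i.val = 2 * l → j.val = 2 * l + 1 →
      (k i : ℤ) ∣ m i ∧ (k i : ℤ) ∣ m j) :
    m ∈ Rset d Q := by
  intro n
  refine Finset.prod_congr rfl fun a _ => Finset.prod_congr rfl fun b _ => ?_
  split_ifs with hab
  · by_cases hpair : OffDiagPair z b.val a.val
    · obtain ⟨l, hl, ⟨hb, ha⟩ | ⟨hb, ha⟩⟩ := hpair
      · exact absurd (Fin.lt_def.mp hab) (by omega)
      · have hprim := hRNF.isPrimitiveRoot hl ha hb
        obtain ⟨hdvda, hdvdb⟩ := hm l hl a b ha hb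
        rw [(hprim.zpow_eq_one_iff_dvd _).mpr (hdvdb.mul_right _),
          (hprim.zpow_eq_one_iff_dvd _).mpr (hdvda.mul_left _)]
    · rw [hRNF.2.2.1 b a hpair, one_zpow, one_zpow]
  · rfl

lemma IsRNF.k1e1_mem_Rset (hRNF : IsRNF d Q z k) (hd : 0 < d) : k1e1 d k hd ∈ Rset d Q := by
  refine hRNF.mem_Rset_of_dvd fun l _ i j hi hj => ⟨?_, ?_⟩
  · by_cases h0 : i = ⟨0, hd⟩ <;> simp [k1e1, h0]
  · simp [k1e1, Fin.ext_iff, hj]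

lemma IsRNF.exists_ne_zero_mem_Rset (hRNF : IsRNF d Q z k) : ∃ t ∈ Rset d Q, t ≠ 0 := by
  have hd : 0 < d := by have := hRNF.1; have := hRNF.2.1; omega
  refine ⟨k1e1 d k hd, hRNF.k1e1_mem_Rset hd, fun h => ?_⟩
  have h0 := congrFun h ⟨0, hd⟩
  have hk := hRNF.one_lt hRNF.1 (i := ⟨0, hd⟩) rfl
  simp only [k1e1, Pi.single_eq_same, Pi.zero_apply] at h0
  omega

lemma IsRNF.exists_not_dvd_of_notMem_Rset (hRNF : IsRNF d Q z k) {m : Fin d → ℤ}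
    (hm : m ∉ Rset d Q) :
    ∃ l < z, ∃ i j : Fin d, i.val = 2 * l ∧ j.val = 2 * l + 1 ∧
      (¬ (k i : ℤ) ∣ m i ∨ ¬ (k i : ℤ) ∣ m j) := by
  by_contra! h
  exact hm (hRNF.mem_Rset_of_dvd h)

lemma IsRNF.cocycleRatio_eq_single_odd (hRNF : IsRNF d Q z k) (hQ : ∀ i j, Q i j ≠ 0)
    (hγ : Generic d γ) (hα : IsCocycle d Q γ α) (hl : l < z) (hi : i.val = 2 * l)
    (hj : j.val = 2 * l + 1) {m : Fin d → ℤ} (hm : ¬ (k i : ℤ) ∣ m i) :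
    cocycleRatio Q γ α m = cocycleRatio Q γ α (Pi.single j 1) :=
  (cocycleRatio_eq_of_qsigma_ne hQ hγ hα hRNF.exists_ne_zero_mem_Rset
    (hRNF.qsigma_single_odd_ne hl hi hj hm)).symm

lemma IsRNF.cocycleRatio_eq_single_even (hRNF : IsRNF d Q z k) (hQ : ∀ i j, Q i j ≠ 0)
    (hγ : Generic d γ) (hα : IsCocycle d Q γ α) (hl : l < z) (hi : i.val = 2 * l)
    (hj : j.val = 2 * l + 1) {m : Fin d → ℤ} (hm : ¬ (k i : ℤ) ∣ m j) :
    cocycleRatio Q γ α m = cocycleRatio Q γ α (Pi.single i 1) :=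
  cocycleRatio_eq_of_qsigma_ne hQ hγ hα hRNF.exists_ne_zero_mem_Rset
    (hRNF.qsigma_single_even_ne hl hi hj hm)

lemma IsRNF.not_dvd_one (hRNF : IsRNF d Q z k) (hl : l < z) (hi : i.val = 2 * l) :
    ¬ (k i : ℤ) ∣ 1 := by
  have := hRNF.one_lt hl hi
  exact_mod_cast Nat.not_dvd_of_pos_of_lt one_pos this

lemma IsRNF.cocycleRatio_single_even_eq_odd (hRNF : IsRNF d Q z k) (hQ : ∀ i j, Q i j ≠ 0)
    (hγ : Generic d γ) (hα : IsCocycle d Q γ α) (hl : l < z) (hi : i.val = 2 * l)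
    (hj : j.val = 2 * l + 1) :
    cocycleRatio Q γ α (Pi.single i 1) = cocycleRatio Q γ α (Pi.single j 1) :=
  hRNF.cocycleRatio_eq_single_odd hQ hγ hα hl hi hj (by simpa using hRNF.not_dvd_one hl hi)

/-- For `l ≠ 0` both sides equal the ratio at `e_i + e_{i₀}`, which commutes with neither unit
vector. -/
lemma IsRNF.cocycleRatio_single_odd_eq (hRNF : IsRNF d Q z k) (hQ : ∀ i j, Q i j ≠ 0)
    (hγ : Generic d γ) (hα : IsCocycle d Q γ α) (hl : l < z) (hi : i.val = 2 * l)
    (hj : j.val = 2 * l + 1) {i₀ j₀ : Fin d} (hi₀ : i₀.val = 2 * 0) (hj₀ : j₀.val = 2 * 0 + 1) :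
    cocycleRatio Q γ α (Pi.single j 1) = cocycleRatio Q γ α (Pi.single j₀ 1) := by
  rcases Nat.eq_zero_or_pos l with rfl | hl0
  · rw [show j = j₀ from Fin.ext (by omega)]
  have hii₀ : i ≠ i₀ := fun h => by rw [← h] at hi₀; omega
  have hwi : (Pi.single i 1 + Pi.single i₀ 1 : Fin d → ℤ) i = 1 := by simp [hii₀]
  have hwi₀ : (Pi.single i 1 + Pi.single i₀ 1 : Fin d → ℤ) i₀ = 1 := by simp [hii₀.symm]
  have hz : 0 < z := hRNF.1
  rw [← hRNF.cocycleRatio_eq_single_odd hQ hγ hα hl hi hj (m := Pi.single i 1 + Pi.single i₀ 1)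
      (by rw [hwi]; exact hRNF.not_dvd_one hl hi),
    ← hRNF.cocycleRatio_eq_single_odd hQ hγ hα hz hi₀ hj₀ (m := Pi.single i 1 + Pi.single i₀ 1)
      (by rw [hwi₀]; exact hRNF.not_dvd_one hz hi₀)]

lemma IsRNF.cocycleRatio_eq_single_zero (hRNF : IsRNF d Q z k) (hQ : ∀ i j, Q i j ≠ 0)
    (hγ : Generic d γ) (hα : IsCocycle d Q γ α) {i₀ : Fin d} (hi₀ : i₀.val = 2 * 0)
    {m : Fin d → ℤ} (hm : m ∉ Rset d Q) :
    cocycleRatio Q γ α m = cocycleRatio Q γ α (Pi.single i₀ 1) := by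
  let j₀ : Fin d := ⟨1, by have := hRNF.1; have := hRNF.2.1; omega⟩
  have hj₀ : j₀.val = 2 * 0 + 1 := rfl
  obtain ⟨l, hl, i, j, hi, hj, hbad⟩ := hRNF.exists_not_dvd_of_notMem_Rset hm
  have hodd : cocycleRatio Q γ α m = cocycleRatio Q γ α (Pi.single j 1) := by
    rcases hbad with hbad | hbad
    · exact hRNF.cocycleRatio_eq_single_odd hQ hγ hα hl hi hj hbad
    · rw [hRNF.cocycleRatio_eq_single_even hQ hγ hα hl hi hj hbad,
        hRNF.cocycleRatio_single_even_eq_odd hQ hγ hα hl hi hj]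
  rw [hodd, hRNF.cocycleRatio_single_odd_eq hQ hγ hα hl hi hj hi₀ hj₀,
    hRNF.cocycleRatio_single_even_eq_odd hQ hγ hα hRNF.1 hi₀ hj₀]

end RationalNormalForm

end QTorus

theorem stmt15_general (d : ℕ) (hd : 0 < d)
    (Q : Matrix (Fin d) (Fin d) ℂ) (hQ : QOk d Q)
    (z : ℕ) (k : Fin d → ℕ) (hRNF : IsRNF d Q z k)
    (γ : Fin d → ℂ) (hγ : Generic d γ)
    (α : g d →ₗ[ℂ] g d →ₗ[ℂ] ℂ) (hα : IsCocycle d Q γ α) :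
    ∀ m : Fin d → ℤ, m ∉ Rset d Q →
      (∃ i : Fin d, (∃ l : ℕ, l < z ∧ i.val = 2 * l) ∧ m i ≠ 0) →
      α (L d m) (L d (-m)) =
        (ip d γ m / ip d γ (Pi.single ⟨0, hd⟩ 1)) * qsigma d Q m (-m) *
          α (L d (Pi.single ⟨0, hd⟩ 1)) (L d (-(Pi.single ⟨0, hd⟩ 1))) := by
  intro m hm _
  have hratio := hRNF.cocycleRatio_eq_single_zero hQ.2.2 hγ hα (i₀ := ⟨0, hd⟩) rfl hm
  have hσ₀ : qsigma d Q (Pi.single ⟨0, hd⟩ 1) (-Pi.single ⟨0, hd⟩ 1) = 1 :=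
    hRNF.qsigma_single_even_left (l := 0) rfl _
  have hIm := ip_ne_zero hγ (ne_zero_of_notMem_Rset hm)
  have hI₀ := ip_ne_zero hγ (Pi.single_ne_zero_iff.mpr one_ne_zero : Pi.single ⟨0, hd⟩ (1 : ℤ) ≠ 0)
  have := qsigma_ne_zero hQ.2.2 m (-m)
  rw [cocycleRatio, cocycleRatio, hσ₀, one_mul] at hratio
  field_simp at hratio ⊢
  linear_combination hratio

/-- for Q in rational normal form, γ generic, and α a normalized
2-cocycle, writing α(m) = α(L_m, L_{-m}): if m ∉ R and m_i ≠ 0 for some odd index i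
with 1 ≤ i ≤ 2z (0-based: an even index i with i < 2z), then
α(m) = ((γ|m)/(γ|e₁)) σ(m,−m) α(e₁). -/
theorem stmt15 (d : ℕ) (hd1 : 1 < d) (hd : 0 < d)
    (Q : Matrix (Fin d) (Fin d) ℂ) (hQ : QOk d Q)
    (z : ℕ) (k : Fin d → ℕ) (hRNF : IsRNF d Q z k)
    (γ : Fin d → ℂ) (hγ : Generic d γ)
    (α : g d →ₗ[ℂ] g d →ₗ[ℂ] ℂ) (hα : IsCocycle d Q γ α)
    (hnorm : IsNormalized d Q k hd α) :
    ∀ m : Fin d → ℤ, m ∉ Rset d Q →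
      (∃ i : Fin d, (∃ l : ℕ, l < z ∧ i.val = 2 * l) ∧ m i ≠ 0) →
      α (L d m) (L d (-m)) =
        (ip d γ m / ip d γ (Pi.single ⟨0, hd⟩ 1)) * qsigma d Q m (-m) *
          α (L d (Pi.single ⟨0, hd⟩ 1)) (L d (-(Pi.single ⟨0, hd⟩ 1))) :=
  stmt15_general d hd Q hQ z k hRNF γ hγ α hα
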